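/- arXiv:1009.0121 — 3 statements merged into one kernel-verified Lean document; each statement's English description precedes it below -/
import Mathlib

section
/- For a sober topological space X, the complete lattice C(X) of closed subsets of X, with supremum = intersection and multiplication = union, is a complete idealic semiring with idempotent multiplication, and the map sending x ∈ X to the closure of {x} is a homeomorphism from X onto Spec C(X) (the space of prime elements of C(X) with the V-topology). -/
/-!
The primes of `C(X)` are exactly the irreducible closed sets, so in a sober space every prime is
`closure {x}` for a unique `x`. The closed set `V(a)` of `Spec C(X)` pulls back to `a` itself
under `x ↦ closure {x}`, which makes this bijection continuous and, being onto, open.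
-/

def IsPrimeElt {R : Type*} [LE R] [Mul R] [One R] (p : R) : Prop :=
  ¬ (1 : R) ≤ p ∧ ∀ a b : R, ¬ a ≤ p → ¬ b ≤ p → ¬ a * b ≤ p

/-- The spectrum of an idealic semiring: its set of prime elements. -/
def SpecT (R : Type*) [LE R] [Mul R] [One R] : Type _ := {p : R // IsPrimeElt p}

/-- The topology on the spectrum, with closed sets the `V(a) = {p | a ≤ p}`. -/
instance (R : Type*) [LE R] [Mul R] [One R] : TopologicalSpace (SpecT R) :=
  TopologicalSpace.generateFrom {U : Set (SpecT R) | ∃ a : R, U = {p : SpecT R | ¬ a ≤ p.1}}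

def Vset {R : Type*} [LE R] [Mul R] [One R] (a : R) : Set (SpecT R) :=
  {p : SpecT R | a ≤ p.1}

/-- The lattice `C(X)` of closed subsets of `X`, ordered by reverse inclusion
(so supremum = intersection, bottom = `X`, top = `∅`). -/
abbrev Cl (X : Type*) [TopologicalSpace X] := (TopologicalSpace.Closeds X)ᵒᵈ

/-- Multiplication on `C(X)` is union of closed sets, with unit `∅` (the top element). -/
instance (X : Type*) [TopologicalSpace X] : CommMonoid (Cl X) where
  mul a b := a ⊓ b
  one := ⊤
  mul_assoc a b c := inf_assoc a b c
  mul_comm a b := inf_comm a b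
  one_mul a := top_inf_eq a
  mul_one a := inf_top_eq a

open TopologicalSpace OrderDual

theorem isClosed_Vset {R : Type*} [LE R] [Mul R] [One R] (a : R) : IsClosed (Vset a) :=
  isOpen_compl_iff.mp (isOpen_generateFrom_of_mem ⟨a, rfl⟩)

namespace Cl

variable {X : Type*} [TopologicalSpace X]

theorem le_iff_subset {a b : Cl X} :
    a ≤ b ↔ ((ofDual b : Closeds X) : Set X) ⊆ (ofDual a : Closeds X) :=
  Iff.rfl

theorem coe_mul (a b : Cl X) :
    ((ofDual (a * b) : Closeds X) : Set X) =
      ((ofDual a : Closeds X) : Set X) ∪ ((ofDual b : Closeds X) : Set X) :=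
  Closeds.coe_sup _ _

theorem coe_one : ((ofDual (1 : Cl X) : Closeds X) : Set X) = ∅ :=
  Closeds.coe_bot

theorem isPrimeElt_iff_isIrreducible (p : Cl X) :
    IsPrimeElt p ↔ IsIrreducible ((ofDual p : Closeds X) : Set X) := by
  rw [IsIrreducible, isPreirreducible_iff_isClosed_union_isClosed, Set.nonempty_iff_ne_empty]
  refine and_congr (not_congr (by rw [le_iff_subset, coe_one, Set.subset_empty_iff])) ⟨?_, ?_⟩
  · intro hp z₁ z₂ hz₁ hz₂ hunion
    by_contra! hz
    exact hp (toDual ⟨z₁, hz₁⟩) (toDual ⟨z₂, hz₂⟩) hz.1 hz.2 (by rwa [le_iff_subset, coe_mul])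
  · intro hp a b ha hb hab
    rw [le_iff_subset, coe_mul] at hab
    exact (hp _ _ (ofDual a).isClosed (ofDual b).isClosed hab).elim ha hb

def closureSingleton (x : X) : Cl X :=
  toDual (Closeds.closure {x})

theorem le_closureSingleton_iff {a : Cl X} {x : X} :
    a ≤ closureSingleton x ↔ x ∈ ((ofDual a : Closeds X) : Set X) :=
  (Closeds.gc {x} (ofDual a)).trans Set.singleton_subset_iff

theorem isPrimeElt_closureSingleton (x : X) : IsPrimeElt (closureSingleton x) :=
  (isPrimeElt_iff_isIrreducible _).mpr isIrreducible_singleton.closure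

end Cl

section toSpecT

variable {X : Type*} [TopologicalSpace X]

def toSpecT (x : X) : SpecT (Cl X) :=
  ⟨Cl.closureSingleton x, Cl.isPrimeElt_closureSingleton x⟩

theorem coe_toSpecT (x : X) : ((ofDual (toSpecT x).1 : Closeds X) : Set X) = closure {x} :=
  rfl

theorem preimage_toSpecT_Vset (a : Cl X) :
    toSpecT ⁻¹' Vset a = ((ofDual a : Closeds X) : Set X) :=
  Set.ext fun _ => Cl.le_closureSingleton_iff

theorem continuous_toSpecT : Continuous (toSpecT (X := X)) :=
  continuous_generateFrom_iff.mpr fun _ ⟨a, ha⟩ => by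
    rw [ha, show {p : SpecT (Cl X) | ¬a ≤ p.1} = (Vset a)ᶜ from rfl, Set.preimage_compl,
      preimage_toSpecT_Vset]
    exact (ofDual a).isClosed.isOpen_compl

theorem toSpecT_injective [T0Space X] : Function.Injective (toSpecT (X := X)) := fun x y hxy =>
  (inseparable_iff_closure_eq.mpr (by rw [← coe_toSpecT x, ← coe_toSpecT y, hxy])).eq

theorem toSpecT_surjective [QuasiSober X] : Function.Surjective (toSpecT (X := X)) := by
  intro p
  have hp := (Cl.isPrimeElt_iff_isIrreducible p.1).mp p.2
  refine ⟨hp.genericPoint, Subtype.ext (congrArg toDual (Closeds.ext ?_))⟩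
  exact (hp.isGenericPoint_genericPoint (ofDual p.1).isClosed).def

theorem isOpenMap_toSpecT [QuasiSober X] : IsOpenMap (toSpecT (X := X)) := by
  intro U hU
  have : U = toSpecT ⁻¹' (Vset (toDual (⟨Uᶜ, hU.isClosed_compl⟩ : Closeds X)))ᶜ := by
    rw [Set.preimage_compl, preimage_toSpecT_Vset]; exact (compl_compl U).symm
  rw [this, Set.image_preimage_eq _ toSpecT_surjective]
  exact (isClosed_Vset _).isOpen_compl

noncomputable def homeomorphSpecT [QuasiSober X] [T0Space X] : X ≃ₜ SpecT (Cl X) :=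
  (Equiv.ofBijective toSpecT ⟨toSpecT_injective, toSpecT_surjective⟩).toHomeomorphOfContinuousOpen
    continuous_toSpecT isOpenMap_toSpecT

end toSpecT

/-- For a sober space `X`, the lattice of closed subsets of `X` with
supremum = intersection and multiplication = union is a complete idealic semiring
with idempotent multiplication, and `x ↦ closure {x}` is a homeomorphism of `X`
onto `Spec C(X)`. -/
theorem stmt13 {X : Type*} [TopologicalSpace X] [QuasiSober X] [T0Space X] :
    (∀ a : Cl X, a * a = a) ∧
    ((1 : Cl X) = ⊤) ∧
    (∀ (a : Cl X) (S : Set (Cl X)), a * sSup S = ⨆ b ∈ S, a * b) ∧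
    ∃ e : X ≃ₜ SpecT (Cl X),
      ∀ x : X, ((OrderDual.ofDual (e x).1 : TopologicalSpace.Closeds X) : Set X)
        = closure {x} :=
  ⟨inf_idem, rfl, fun _ _ => inf_sSup_eq, homeomorphSpecT, coe_toSpecT⟩
end

section
/- Let R be an algebraic complete idealic semiring. Then Spec R is quasi-compact, quasi-separated (the intersection of two quasi-compact opens is quasi-compact), and every open subset is a union of quasi-compact open subsets. -/
open CompleteLattice

/-!
Write `D(a) = {p | a ≰ p}`. In an integral commutative quantale `D(a * b) = D(a) ∩ D(b)` and `D`
turns joins into unions, so the `D(a)` form a basis, and by compact generation so do the `D(c)`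
with `c` compact. The key point is the analogue of "`D(c) ⊆ D(b)` iff `c` lies in the radical of
`b`": if no power of `c` lies below `b`, an element maximal among those above `b` avoiding all
powers of `c` exists by Zorn (the powers being compact) and is prime. Hence a cover of `D(c)`
by `D(aᵢ)` gives `cⁿ ≤ ⨆ aᵢ`, and compactness of `cⁿ` makes finitely many `aᵢ` suffice. So the
quasi-compact opens are exactly the `D(c)` with `c` compact, which are closed under intersection.
-/

section Lattice

variable {R : Type*} [CompleteLattice R]

theorem exists_le_maximal_forall_not_le {K : Set R} (hK : ∀ k ∈ K, IsCompactElement k) {s : R}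
    (hs : ∀ k ∈ K, ¬ k ≤ s) : ∃ m, s ≤ m ∧ Maximal (fun x => ∀ k ∈ K, ¬ k ≤ x) m := by
  refine zorn_le_nonempty₀ _ (fun C hCK hC y hy => ⟨sSup C, fun k hk hkC => ?_,
    fun _ => le_sSup⟩) s hs
  obtain ⟨x, hxC, hkx⟩ := (isCompactElement_iff_le_of_directed_sSup_le R k).1 (hK k hk) C
    ⟨y, hy⟩ hC.directedOn hkC
  exact hCK hxC k hk hkx

end Lattice

section IntegralMonoid

variable {M : Type*} [CommMonoid M] [PartialOrder M] [OrderTop M] [MulLeftMono M]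

theorem mul_le_left_of_one_eq_top (h1 : (1 : M) = ⊤) (a b : M) : a * b ≤ a :=
  mul_le_of_le_one_right' (h1 ▸ le_top)

theorem mul_le_right_of_one_eq_top (h1 : (1 : M) = ⊤) (a b : M) : a * b ≤ b :=
  mul_comm b a ▸ mul_le_left_of_one_eq_top h1 b a

end IntegralMonoid

section Quantale

variable {R : Type*} [CompleteLattice R] [CommMonoid R] [IsQuantale R]

theorem sup_mul_sup_le_of_one_eq_top (h1 : (1 : R) = ⊤) (m a b : R) :
    (m ⊔ a) * (m ⊔ b) ≤ m ⊔ a * b := by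
  rw [Quantale.sup_mul_distrib, Quantale.mul_sup_distrib, Quantale.mul_sup_distrib]
  exact sup_le (sup_le (le_sup_of_le_left (mul_le_left_of_one_eq_top h1 m m))
    (le_sup_of_le_left (mul_le_left_of_one_eq_top h1 m b)))
    (sup_le (le_sup_of_le_left (mul_le_right_of_one_eq_top h1 a m)) le_sup_right)

theorem isPrimeElt_of_maximal_forall_not_le (h1 : (1 : R) = ⊤) {S : Submonoid R} {m : R}
    (hm : Maximal (fun x => ∀ k ∈ S, ¬ k ≤ x) m) : IsPrimeElt m := by
  refine ⟨hm.1 1 S.one_mem, fun a b ha hb hab => ?_⟩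
  have hmeets : ∀ x, ¬ x ≤ m → ∃ k ∈ S, k ≤ m ⊔ x := fun x hx => by
    by_contra! h
    exact hx (le_sup_right.trans (hm.2 h le_sup_left))
  obtain ⟨k, hkS, hk⟩ := hmeets a ha
  obtain ⟨l, hlS, hl⟩ := hmeets b hb
  refine hm.1 (k * l) (S.mul_mem hkS hlS) ?_
  calc k * l ≤ (m ⊔ a) * (m ⊔ b) := mul_le_mul' hk hl
    _ ≤ m ⊔ a * b := sup_mul_sup_le_of_one_eq_top h1 m a b
    _ = m := sup_eq_left.2 hab

end Quantale

theorem isCompactElement_pow {R : Type*} [CompleteLattice R] [Monoid R]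
    (hone : IsCompactElement (1 : R))
    (hmul : ∀ a b : R, IsCompactElement a → IsCompactElement b → IsCompactElement (a * b))
    {c : R} (hc : IsCompactElement c) (n : ℕ) : IsCompactElement (c ^ n) := by
  induction n with
  | zero => rwa [pow_zero]
  | succ n ih => rw [pow_succ]; exact hmul _ _ ih hc

namespace SpecT

section Basic

variable {R : Type*} [LE R] [Mul R] [One R]

def basicOpen (a : R) : Set (SpecT R) := {p | ¬ a ≤ p.1}

theorem isOpen_basicOpen (a : R) : IsOpen (basicOpen a) :=
  TopologicalSpace.GenerateOpen.basic _ ⟨a, rfl⟩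

theorem basicOpen_one : basicOpen (1 : R) = Set.univ :=
  Set.eq_univ_of_forall fun p => p.2.1

end Basic

theorem basicOpen_mono {R : Type*} [Preorder R] [Mul R] [One R] {a b : R} (h : a ≤ b) :
    basicOpen a ⊆ basicOpen b :=
  fun _ hp ha => hp (h.trans ha)

theorem basicOpen_subset_basicOpen_pow {R : Type*} [LE R] [Monoid R] (c : R) (n : ℕ) :
    basicOpen c ⊆ basicOpen (c ^ n) := by
  intro p hp
  induction n with
  | zero => rw [pow_zero]; exact p.2.1
  | succ n ih => rw [pow_succ]; exact p.2.2 _ _ ih hp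

section Joins

variable {R : Type*} [CompleteLattice R] [Mul R] [One R]

theorem basicOpen_iSup {ι : Sort*} (f : ι → R) : basicOpen (⨆ i, f i) = ⋃ i, basicOpen (f i) := by
  ext p
  simp [basicOpen]

theorem basicOpen_finsetSup {ι : Type*} (t : Finset ι) (f : ι → R) :
    basicOpen (t.sup f) = ⋃ i ∈ t, basicOpen (f i) := by
  ext p
  simp [basicOpen]

end Joins

variable {R : Type*} [CompleteLattice R] [CommMonoid R] [IsQuantale R]

theorem basicOpen_mul (h1 : (1 : R) = ⊤) (a b : R) :
    basicOpen (a * b) = basicOpen a ∩ basicOpen b :=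
  Set.Subset.antisymm
    (fun _ hp => ⟨basicOpen_mono (mul_le_left_of_one_eq_top h1 a b) hp,
      basicOpen_mono (mul_le_right_of_one_eq_top h1 a b) hp⟩)
    (fun p ⟨ha, hb⟩ => p.2.2 a b ha hb)

theorem isTopologicalBasis_basicOpen (h1 : (1 : R) = ⊤) :
    TopologicalSpace.IsTopologicalBasis {U : Set (SpecT R) | ∃ a : R, U = basicOpen a} := by
  refine ⟨?_, ?_, rfl⟩
  · rintro _ ⟨a, rfl⟩ _ ⟨b, rfl⟩ p hp
    exact ⟨basicOpen (a * b), ⟨a * b, rfl⟩, by rwa [basicOpen_mul h1], (basicOpen_mul h1 a b).le⟩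
  · exact Set.eq_univ_of_univ_subset (basicOpen_one (R := R) ▸ Set.subset_sUnion_of_mem ⟨1, rfl⟩)

theorem isTopologicalBasis_basicOpen_compact [IsCompactlyGenerated R] (h1 : (1 : R) = ⊤) :
    TopologicalSpace.IsTopologicalBasis
      (Set.range fun c : {c : R // IsCompactElement c} => basicOpen c.1) := by
  refine TopologicalSpace.isTopologicalBasis_of_isOpen_of_nhds
    (by rintro _ ⟨c, rfl⟩; exact isOpen_basicOpen _) fun p U hpU hU => ?_
  obtain ⟨_, ⟨a, rfl⟩, hpa, haU⟩ := (isTopologicalBasis_basicOpen h1).exists_subset_of_mem_open hpU hU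
  rw [← sSup_compact_le_eq a, sSup_eq_iSup', basicOpen_iSup, Set.mem_iUnion] at hpa
  obtain ⟨⟨c, hc, hca⟩, hpc⟩ := hpa
  exact ⟨_, ⟨⟨c, hc⟩, rfl⟩, hpc, (basicOpen_mono hca).trans haU⟩

theorem exists_le_not_le_of_forall_pow_not_le (h1 : (1 : R) = ⊤) {c b : R}
    (hc : ∀ n : ℕ, IsCompactElement (c ^ n)) (hb : ∀ n : ℕ, ¬ c ^ n ≤ b) :
    ∃ p : SpecT R, b ≤ p.1 ∧ ¬ c ≤ p.1 := by
  have hpowers : ∀ k ∈ Submonoid.powers c, IsCompactElement k ∧ ¬ k ≤ b := by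
    rintro _ ⟨n, rfl⟩
    exact ⟨hc n, hb n⟩
  obtain ⟨m, hbm, hm⟩ := exists_le_maximal_forall_not_le (fun k hk => (hpowers k hk).1)
    fun k hk => (hpowers k hk).2
  exact ⟨⟨m, isPrimeElt_of_maximal_forall_not_le h1 hm⟩, hbm,
    hm.1 c (Submonoid.mem_powers c)⟩

theorem exists_pow_le_of_basicOpen_subset (h1 : (1 : R) = ⊤) {c b : R}
    (hc : ∀ n : ℕ, IsCompactElement (c ^ n)) (h : basicOpen c ⊆ basicOpen b) :
    ∃ n : ℕ, c ^ n ≤ b := by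
  by_contra! hb
  obtain ⟨p, hbp, hcp⟩ := exists_le_not_le_of_forall_pow_not_le h1 hc hb
  exact h hcp hbp

theorem isCompact_basicOpen (h1 : (1 : R) = ⊤) {c : R}
    (hc : ∀ n : ℕ, IsCompactElement (c ^ n)) : IsCompact (basicOpen c) := by
  refine isCompact_generateFrom' rfl fun ι U hcover => ?_
  choose a ha using fun i => (U i).2
  replace ha : ∀ i, (U i : Set (SpecT R)) = basicOpen (a i) := ha
  have hsub : basicOpen c ⊆ basicOpen (⨆ i, a i) := by
    simpa only [basicOpen_iSup, ha] using hcover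
  obtain ⟨n, hn⟩ := exists_pow_le_of_basicOpen_subset h1 hc hsub
  obtain ⟨t, ht⟩ := (hc n).exists_finset_of_le_iSup _ a hn
  refine ⟨t, t.finite_toSet, ?_⟩
  calc basicOpen c ⊆ basicOpen (c ^ n) := basicOpen_subset_basicOpen_pow c n
    _ ⊆ basicOpen (⨆ i ∈ t, a i) := basicOpen_mono ht
    _ = ⋃ i ∈ (t : Set ι), (U i : Set (SpecT R)) := by simp only [basicOpen_iSup, ha,
      Finset.mem_coe]

theorem exists_eq_basicOpen_of_isCompact_isOpen [IsCompactlyGenerated R] (h1 : (1 : R) = ⊤)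
    {U : Set (SpecT R)} (hUc : IsCompact U) (hUo : IsOpen U) :
    ∃ c : R, IsCompactElement c ∧ U = basicOpen c := by
  obtain ⟨s, hs, rfl⟩ := eq_finite_iUnion_of_isTopologicalBasis_of_isCompact_open _
    (isTopologicalBasis_basicOpen_compact h1) U hUc hUo
  obtain ⟨t, rfl⟩ := hs.exists_finset_coe
  refine ⟨t.sup Subtype.val, isCompactElement_finsetSup t fun c _ => c.2, ?_⟩
  simp only [basicOpen_finsetSup, Finset.mem_coe]

end SpecT

/-- For an algebraic complete idealic semiring `R`, the space `Spec R` is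
quasi-compact, quasi-separated (intersections of quasi-compact opens are quasi-compact),
and every open subset is a union of quasi-compact open subsets. -/
theorem stmt15 {R : Type*} [CompleteLattice R] [CommMonoid R]
    (hdist : ∀ (a : R) (S : Set R), a * sSup S = ⨆ b ∈ S, a * b)
    (h1 : (1 : R) = ⊤)
    (halg : ∀ a : R, a = sSup {x : R | IsCompactElement x ∧ x ≤ a})
    (htop : IsCompactElement (1 : R))
    (hmulcpt : ∀ a b : R, IsCompactElement a → IsCompactElement b → IsCompactElement (a * b)) :
    CompactSpace (SpecT R) ∧
    (∀ U V : Set (SpecT R), IsOpen U → IsCompact U → IsOpen V → IsCompact V →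
      IsCompact (U ∩ V)) ∧
    (∀ U : Set (SpecT R), IsOpen U →
      ∃ 𝒰 : Set (Set (SpecT R)), (∀ W ∈ 𝒰, IsOpen W ∧ IsCompact W) ∧ U = ⋃₀ 𝒰) := by
  have : IsQuantale R := ⟨hdist, fun S a => by simpa only [mul_comm _ a] using hdist a S⟩
  have : IsCompactlyGenerated R := ⟨fun a => ⟨_, fun _ hx => hx.1, (halg a).symm⟩⟩
  have hcpt : ∀ c : R, IsCompactElement c → IsCompact (SpecT.basicOpen c) := fun c hc =>
    SpecT.isCompact_basicOpen h1 (isCompactElement_pow htop hmulcpt hc)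
  refine ⟨⟨SpecT.basicOpen_one (R := R) ▸ hcpt 1 htop⟩, ?_, ?_⟩
  · intro U V hUo hUc hVo hVc
    obtain ⟨c, hc, rfl⟩ := SpecT.exists_eq_basicOpen_of_isCompact_isOpen h1 hUc hUo
    obtain ⟨d, hd, rfl⟩ := SpecT.exists_eq_basicOpen_of_isCompact_isOpen h1 hVc hVo
    rw [← SpecT.basicOpen_mul h1]
    exact hcpt _ (hmulcpt c d hc hd)
  · intro U hU
    obtain ⟨𝒰, h𝒰, rfl⟩ := (SpecT.isTopologicalBasis_basicOpen_compact h1).open_eq_sUnion hU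
    refine ⟨𝒰, fun W hW => ?_, rfl⟩
    obtain ⟨⟨c, hc⟩, rfl⟩ := h𝒰 hW
    exact ⟨SpecT.isOpen_basicOpen c, hcpt c hc⟩
end

section
/- Let R be an algebraic complete idealic semiring and Σ a multiplicative submonoid of R consisting of compact elements. Let 𝔞 be the congruence relation on R generated by the pairs (1, s) for s ∈ Σ. Then (f, g) ∈ 𝔞 if and only if: for every compact x ≤ f there exists s ∈ Σ with s·x ≤ g, and for every compact y ≤ g there exists t ∈ Σ with t·y ≤ f. -/
/-!
Write `a ≼ b` when every compact `x ≤ a` satisfies `s * x ≤ b` for some `s ∈ Σ`. The relation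
`a ≼ b ∧ b ≼ a` is a congruence: for suprema and products, a compact element lies below a
finite join, and since `1 = ⊤` makes multiplication decreasing, the product of the finitely
many multipliers involved works for all of them at once; transitivity uses that `s * x` is again
compact. It contains the generators `(1, s)`, so it contains `𝔞`. Conversely, any congruence
containing `(1, t)` for `t ∈ Σ` relates `y` to `t * y`; joining these pairs over the compact
`y ≤ g` shows that `g ≼ f` puts `(f ⊔ g, f)` into it, and symmetrically `(f ⊔ g, g)`.
-/

open CompleteLattice

/-- A congruence relation on a complete semiring: an equivalence relation compatible
with arbitrary suprema and with multiplication. -/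
def IsCong {R : Type*} [CompleteLattice R] [Mul R] (r : R → R → Prop) : Prop :=
  Equivalence r ∧
  (∀ S : Set (R × R), (∀ p ∈ S, r p.1 p.2) →
    r (sSup (Prod.fst '' S)) (sSup (Prod.snd '' S))) ∧
  (∀ a b c d : R, r a b → r c d → r (a * c) (b * d))

/-- The congruence relation generated by a set of pairs: the smallest congruence
containing them (as a relation, the intersection of all congruences containing them). -/
def congCl {R : Type*} [CompleteLattice R] [Mul R] (s : Set (R × R)) (a b : R) : Prop :=
  ∀ r : R → R → Prop, IsCong r → (∀ p ∈ s, r p.1 p.2) → r a b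

theorem sSup_mul_sSup {R : Type*} [Semigroup R] [CompleteLattice R] [IsQuantale R]
    (s t : Set R) : sSup s * sSup t = sSup (Set.image2 (· * ·) s t) := by
  simp_rw [sSup_image2, sSup_mul_distrib, mul_sSup_distrib]

section LeUpTo

variable {R : Type*} [CommMonoid R] [CompleteLattice R] (M : Submonoid R)

def LeUpTo (a b : R) : Prop :=
  ∀ x, IsCompactElement x → x ≤ a → ∃ s ∈ M, s * x ≤ b

variable {M} {a b c d : R}

theorem LeUpTo.refl (a : R) : LeUpTo M a a :=
  fun x _ hxa => ⟨1, M.one_mem, by rwa [one_mul]⟩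

theorem LeUpTo.mono_left (hab : a ≤ b) (h : LeUpTo M b c) : LeUpTo M a c :=
  fun x hx hxa => h x hx (hxa.trans hab)

theorem LeUpTo.mono_right (h : LeUpTo M a b) (hbc : b ≤ c) : LeUpTo M a c :=
  fun x hx hxa => (h x hx hxa).imp fun _ ⟨hs, hsx⟩ => ⟨hs, hsx.trans hbc⟩

theorem LeUpTo.trans (hM : ∀ s ∈ M, IsCompactElement s)
    (hmul : ∀ a b : R, IsCompactElement a → IsCompactElement b → IsCompactElement (a * b))
    (hab : LeUpTo M a b) (hbc : LeUpTo M b c) : LeUpTo M a c := by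
  intro x hx hxa
  obtain ⟨s, hs, hsx⟩ := hab x hx hxa
  obtain ⟨t, ht, htx⟩ := hbc (s * x) (hmul s x (hM s hs) hx) hsx
  exact ⟨t * s, M.mul_mem ht hs, by rwa [mul_assoc]⟩

variable [IsQuantale R]

theorem leUpTo_of_mul_le {s : R} (hs : s ∈ M) (h : s * a ≤ b) : LeUpTo M a b :=
  fun _ _ hxa => ⟨s, hs, (mul_le_mul_right hxa s).trans h⟩

theorem leUpTo_sSup (h1 : (1 : R) = ⊤) {D : Set R} (hD : ∀ d ∈ D, ∃ s ∈ M, s * d ≤ b) :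
    LeUpTo M (sSup D) b := by
  intro x hx hxD
  obtain ⟨T, hTD, hxT⟩ := (isCompactElement_iff_exists_le_sSup_of_le_sSup R x).1 hx D hxD
  choose! u huM hub using hD
  refine ⟨∏ d ∈ T, u d, M.prod_mem fun d hd => huM d (hTD hd), ?_⟩
  rw [Finset.sup_id_eq_sSup] at hxT
  calc (∏ d ∈ T, u d) * x ≤ (∏ d ∈ T, u d) * sSup ↑T := mul_le_mul_right hxT _
    _ = ⨆ d ∈ (↑T : Set R), (∏ d ∈ T, u d) * d := mul_sSup_distrib
    _ ≤ b := iSup₂_le fun d hd => by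
      obtain ⟨v, hv⟩ := Finset.dvd_prod_of_mem u hd
      calc (∏ d ∈ T, u d) * d = v * (u d * d) := by rw [hv, mul_comm (u d), mul_assoc]
        _ ≤ u d * d := mul_le_of_le_one_left' (h1 ▸ le_top)
        _ ≤ b := hub d (hTD hd)

variable [IsCompactlyGenerated R]

theorem leUpTo_sSup_of_forall (h1 : (1 : R) = ⊤) {A : Set R} (hA : ∀ a ∈ A, LeUpTo M a b) :
    LeUpTo M (sSup A) b := by
  refine LeUpTo.mono_left (sSup_le fun a ha => ?_)
    (leUpTo_sSup h1 (D := ⋃ a ∈ A, {x | IsCompactElement x ∧ x ≤ a}) ?_)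
  · rw [← sSup_compact_le_eq a]
    exact sSup_le_sSup fun x hx => Set.mem_biUnion ha hx
  · intro d hd
    obtain ⟨a, ha, hd, hda⟩ := Set.mem_iUnion₂.mp hd
    exact hA a ha d hd hda

theorem LeUpTo.sSup (h1 : (1 : R) = ⊤) {S : Set (R × R)} (hS : ∀ p ∈ S, LeUpTo M p.1 p.2) :
    LeUpTo M (sSup (Prod.fst '' S)) (sSup (Prod.snd '' S)) :=
  leUpTo_sSup_of_forall h1 fun _ ⟨p, hp, hpa⟩ =>
    hpa ▸ (hS p hp).mono_right (le_sSup ⟨p, hp, rfl⟩)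

theorem LeUpTo.mul (h1 : (1 : R) = ⊤) (hab : LeUpTo M a b) (hcd : LeUpTo M c d) :
    LeUpTo M (a * c) (b * d) := by
  rw [← sSup_compact_le_eq a, ← sSup_compact_le_eq c, sSup_mul_sSup]
  refine leUpTo_sSup h1 ?_
  rintro _ ⟨a', ⟨ha', ha'a⟩, c', ⟨hc', hc'c⟩, rfl⟩
  obtain ⟨s, hs, hsa⟩ := hab a' ha' ha'a
  obtain ⟨t, ht, htc⟩ := hcd c' hc' hc'c
  exact ⟨s * t, M.mul_mem hs ht, mul_mul_mul_comm s t a' c' ▸ mul_le_mul' hsa htc⟩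

theorem isCong_leUpTo (h1 : (1 : R) = ⊤) (hM : ∀ s ∈ M, IsCompactElement s)
    (hmul : ∀ a b : R, IsCompactElement a → IsCompactElement b → IsCompactElement (a * b)) :
    IsCong fun a b => LeUpTo M a b ∧ LeUpTo M b a := by
  refine ⟨⟨fun a => ⟨.refl a, .refl a⟩, And.symm, fun hab hbc =>
    ⟨hab.1.trans hM hmul hbc.1, hbc.2.trans hM hmul hab.2⟩⟩, fun S hS => ⟨?_, ?_⟩,
    fun a b c d hab hcd => ⟨hab.1.mul h1 hcd.1, hab.2.mul h1 hcd.2⟩⟩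
  · exact LeUpTo.sSup h1 fun p hp => (hS p hp).1
  · have := LeUpTo.sSup (M := M) h1 (S := Prod.swap '' S) fun _ ⟨p, hp, hq⟩ => hq ▸ (hS p hp).2
    rwa [Set.image_image, Set.image_image] at this

end LeUpTo

section Congruence

variable {R : Type*} [CommMonoid R] [CompleteLattice R] [IsCompactlyGenerated R] {M : Submonoid R}

theorem IsCong.sup_left_of_leUpTo {r : R → R → Prop} (hr : IsCong r) (hM : ∀ t ∈ M, r 1 t)
    {a b : R} (hba : LeUpTo M b a) : r (a ⊔ b) a := by
  obtain ⟨hequiv, hsup, hmul⟩ := hr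
  choose! t htM hta using hba
  let S : Set (R × R) :=
    insert (a, a) ((fun y => (y, t y * y)) '' {y | IsCompactElement y ∧ y ≤ b})
  have hS : ∀ p ∈ S, r p.1 p.2 := by
    rintro p (rfl | ⟨y, hy, rfl⟩)
    · exact hequiv.refl a
    · simpa only [one_mul] using hmul 1 (t y) y y (hM _ (htM y hy.1 hy.2)) (hequiv.refl y)
  have hfst : sSup (Prod.fst '' S) = a ⊔ b := by
    simp only [S, Set.image_insert_eq, Set.image_image, Set.image_id', sSup_insert,
      sSup_compact_le_eq]
  have hsnd : sSup (Prod.snd '' S) = a := by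
    simp only [S, Set.image_insert_eq, Set.image_image, sSup_insert, sup_eq_left]
    exact sSup_le fun _ ⟨y, hy, hyz⟩ => hyz ▸ hta y hy.1 hy.2
  simpa only [hfst, hsnd] using hsup S hS

theorem congCl_iff_leUpTo [IsQuantale R] (h1 : (1 : R) = ⊤) (hM : ∀ s ∈ M, IsCompactElement s)
    (hmul : ∀ a b : R, IsCompactElement a → IsCompactElement b → IsCompactElement (a * b))
    {f g : R} :
    congCl {p : R × R | p.1 = 1 ∧ p.2 ∈ M} f g ↔ LeUpTo M f g ∧ LeUpTo M g f := by
  constructor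
  · refine fun h => h _ (isCong_leUpTo h1 hM hmul) ?_
    rintro ⟨_, s⟩ ⟨rfl, hs⟩
    exact ⟨leUpTo_of_mul_le hs (mul_one s).le, (LeUpTo.refl s).mono_right (h1 ▸ le_top)⟩
  · rintro ⟨hfg, hgf⟩ r hr hgen
    have hM' : ∀ t ∈ M, r 1 t := fun t ht => hgen (1, t) ⟨rfl, ht⟩
    have hf : r (f ⊔ g) f := hr.sup_left_of_leUpTo hM' hgf
    have hg : r (f ⊔ g) g := sup_comm g f ▸ hr.sup_left_of_leUpTo hM' hfg
    exact hr.1.trans (hr.1.symm hf) hg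

end Congruence

theorem stmt19_general {R : Type*} [CompleteLattice R] [CommMonoid R]
    (hdist : ∀ (a : R) (S : Set R), a * sSup S = ⨆ b ∈ S, a * b)
    (h1 : (1 : R) = ⊤)
    (halg : ∀ a : R, a = sSup {x : R | IsCompactElement x ∧ x ≤ a})
    (hmulcpt : ∀ a b : R, IsCompactElement a → IsCompactElement b → IsCompactElement (a * b))
    (M : Set R) (h1M : (1 : R) ∈ M) (hmulM : ∀ s ∈ M, ∀ t ∈ M, s * t ∈ M)
    (hcptM : ∀ s ∈ M, IsCompactElement s)
    (f g : R) :
    congCl {p : R × R | p.1 = 1 ∧ p.2 ∈ M} f g ↔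
      ((∀ x : R, IsCompactElement x → x ≤ f → ∃ s ∈ M, s * x ≤ g) ∧
       (∀ y : R, IsCompactElement y → y ≤ g → ∃ t ∈ M, t * y ≤ f)) := by
  have : IsQuantale R :=
    ⟨hdist, fun S a => by simpa only [mul_comm _ a] using hdist a S⟩
  have : IsCompactlyGenerated R := ⟨fun a => ⟨_, fun _ hx => hx.1, (halg a).symm⟩⟩
  let N : Submonoid R := ⟨⟨M, fun {s t} hs ht => hmulM s hs t ht⟩, h1M⟩
  exact congCl_iff_leUpTo (M := N) h1 hcptM hmulcpt

/-- Let `R` be an algebraic complete idealic semiring, `M` a multiplicative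
submonoid of compact elements, and `𝔞` the congruence generated by `{(1, s) | s ∈ M}`.
Then `(f, g) ∈ 𝔞` iff for every compact `x ≤ f` there is `s ∈ M` with `s·x ≤ g`, and
for every compact `y ≤ g` there is `t ∈ M` with `t·y ≤ f`. -/
theorem stmt19 {R : Type*} [CompleteLattice R] [CommMonoid R]
    (hdist : ∀ (a : R) (S : Set R), a * sSup S = ⨆ b ∈ S, a * b)
    (h1 : (1 : R) = ⊤)
    (halg : ∀ a : R, a = sSup {x : R | IsCompactElement x ∧ x ≤ a})
    (htop : IsCompactElement (1 : R))
    (hmulcpt : ∀ a b : R, IsCompactElement a → IsCompactElement b → IsCompactElement (a * b))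
    (M : Set R) (h1M : (1 : R) ∈ M) (hmulM : ∀ s ∈ M, ∀ t ∈ M, s * t ∈ M)
    (hcptM : ∀ s ∈ M, IsCompactElement s)
    (f g : R) :
    congCl {p : R × R | p.1 = 1 ∧ p.2 ∈ M} f g ↔
      ((∀ x : R, IsCompactElement x → x ≤ f → ∃ s ∈ M, s * x ≤ g) ∧
       (∀ y : R, IsCompactElement y → y ≤ g → ∃ t ∈ M, t * y ≤ f)) :=
  stmt19_general hdist h1 halg hmulcpt M h1M hmulM hcptM f g
end
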